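/- arXiv:1107.0151 — 4 statements merged into one kernel-verified Lean document; each statement's English description precedes it below -/
import Mathlib

section
/- For every real z ≠ 0 and real a, exp(-(a²/2)(z·coth(z) - 1)) = ∏_{n=0}^{N} [exp((a²/2)·2^n·(z/2^n)/sinh(z/2^n))·exp(-(a²/2)·2^n)] · exp(-(a²/2)(z·coth(z/2^{N+1}) - 2^{N+1})). -/
open Real

lemma coth_half_step (x : ℝ) (hx : x ≠ 0) :
    Real.cosh x / Real.sinh x =
      Real.cosh (x / 2) / Real.sinh (x / 2) - 1 / Real.sinh x := by
  have hs : Real.sinh x ≠ 0 := fun h => hx (Real.sinh_eq_zero.mp h)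
  have hs2 : Real.sinh (x / 2) ≠ 0 := fun h => hx (by
    have := Real.sinh_eq_zero.mp h; linarith)
  have h1 : Real.sinh x = 2 * Real.sinh (x / 2) * Real.cosh (x / 2) := by
    have := Real.sinh_two_mul (x / 2); rw [show 2 * (x / 2) = x by ring] at this
    linarith
  have h2 : Real.cosh x = 2 * Real.cosh (x / 2) ^ 2 - 1 := by
    have := Real.cosh_two_mul (x / 2); rw [show 2 * (x / 2) = x by ring] at this
    linarith [Real.cosh_sq_sub_sinh_sq (x / 2)]
  field_simp
  rw [h1, h2]; ring

lemma step_exponent (z : ℝ) (hz : z ≠ 0) (c : ℝ) (k : ℕ) :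
    -c * (z * (Real.cosh (z / 2 ^ k) / Real.sinh (z / 2 ^ k)) - 2 ^ k) =
      c * 2 ^ k * ((z / 2 ^ k) / Real.sinh (z / 2 ^ k)) + (-c * 2 ^ k) +
        (-c * (z * (Real.cosh (z / 2 ^ (k + 1)) / Real.sinh (z / 2 ^ (k + 1))) - 2 ^ (k + 1))) := by
  have hx : (z / 2 ^ k : ℝ) ≠ 0 := by positivity
  have h := coth_half_step (z / 2 ^ k) hx
  rw [show (z / 2 ^ k / 2 : ℝ) = z / 2 ^ (k + 1) by ring] at h
  rw [h]
  have h2k : (2 : ℝ) ^ k ≠ 0 := by positivity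
  field_simp
  ring

/-- Finite product decomposition underlying the logistic expansion:
for real `z ≠ 0` and real `a`,
`exp(-(a²/2)(z coth z - 1)) = ∏_{n=0}^{N} exp((a²/2) 2ⁿ (z/2ⁿ)/sinh(z/2ⁿ)) exp(-(a²/2) 2ⁿ)
  · exp(-(a²/2)(z coth(z/2^(N+1)) - 2^(N+1)))`. -/
theorem exp_coth_eq_finprod (z : ℝ) (hz : z ≠ 0) (a : ℝ) (N : ℕ) :
    Real.exp (-(a ^ 2 / 2) * (z * (Real.cosh z / Real.sinh z) - 1)) =
      (∏ n ∈ Finset.range (N + 1),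
          Real.exp ((a ^ 2 / 2) * 2 ^ n * ((z / 2 ^ n) / Real.sinh (z / 2 ^ n))) *
            Real.exp (-(a ^ 2 / 2) * 2 ^ n)) *
        Real.exp (-(a ^ 2 / 2) *
          (z * (Real.cosh (z / 2 ^ (N + 1)) / Real.sinh (z / 2 ^ (N + 1))) - 2 ^ (N + 1))) := by
  induction N with
  | zero =>
    rw [Finset.prod_range_one, ← Real.exp_add, ← Real.exp_add]
    congr 1
    have h := step_exponent z hz (a ^ 2 / 2) 0
    norm_num at h ⊢
    linarith
  | succ n ih =>
    have key : Real.exp (-(a ^ 2 / 2) *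
          (z * (Real.cosh (z / 2 ^ (n + 1)) / Real.sinh (z / 2 ^ (n + 1))) - 2 ^ (n + 1))) =
        (Real.exp ((a ^ 2 / 2) * 2 ^ (n + 1) * ((z / 2 ^ (n + 1)) / Real.sinh (z / 2 ^ (n + 1)))) *
            Real.exp (-(a ^ 2 / 2) * 2 ^ (n + 1))) *
          Real.exp (-(a ^ 2 / 2) *
            (z * (Real.cosh (z / 2 ^ (n + 1 + 1)) / Real.sinh (z / 2 ^ (n + 1 + 1))) -
              2 ^ (n + 1 + 1))) := by
      rw [← Real.exp_add, ← Real.exp_add, step_exponent z hz (a ^ 2 / 2) (n + 1)]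
    rw [Finset.prod_range_succ, ih, key]
    ring
end

section
/- For every real z ≠ 0 and real a, exp(-(a²/2)(z·coth(z) - 1)) equals the infinite product ∏_{n=0}^{∞} exp((a²/2)·2^n·((z/2^n)/sinh(z/2^n) - 1)), and this infinite product converges. -/
/-!
With `φ x = x coth x - 1`, the identity `coth y - coth (2y) = 1 / sinh (2y)` gives
`2 y / sinh (2 y) - 1 = 2 φ y - φ (2 y)`, so the `n`-th term of the series of exponents is
`gₙ₊₁ - gₙ` with `gₙ = 2ⁿ φ (z / 2ⁿ)`. These terms are nonpositive because `x ≤ sinh x`, and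
`0 ≤ φ x ≤ x² / 2` forces `gₙ → 0`; hence the series sums to `-g₀ = -φ z`, and exponentiating
turns the sum into the product.
-/

open Real Filter Topology

namespace Real

theorem sinh_le_mul_cosh {x : ℝ} (hx : 0 ≤ x) : sinh x ≤ x * cosh x := by
  rcases hx.eq_or_lt with rfl | hx
  · simp
  obtain ⟨c, ⟨hc₀, hcx⟩, hslope⟩ := exists_hasDerivAt_eq_slope sinh cosh hx
    continuous_sinh.continuousOn fun c _ ↦ hasDerivAt_sinh c
  have hcosh : cosh c ≤ cosh x := cosh_le_cosh.2 <| by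
    rw [abs_of_pos hc₀, abs_of_pos hx]; exact hcx.le
  rw [sinh_zero, sub_zero, sub_zero, eq_div_iff hx.ne'] at hslope
  nlinarith

theorem mul_cosh_sub_sinh_le {x : ℝ} (hx : 0 ≤ x) :
    x * cosh x - sinh x ≤ x ^ 2 / 2 * sinh x := by
  obtain ⟨y, rfl⟩ : ∃ y, x = 2 * y := ⟨x / 2, by ring⟩
  have hy : 0 ≤ y := by linarith
  have hsinh : 2 * y ≤ sinh (2 * y) := self_le_sinh_iff.2 hx
  -- `cosh x - 1 = 2 sinh² y` and `sinh x = 2 sinh y cosh y` reduce the claim to `tanh y ≤ y`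
  have htanh := mul_le_mul_of_nonneg_left (sinh_le_mul_cosh hy)
    (mul_nonneg hy (sinh_nonneg_iff.2 hy))
  rw [sinh_two_mul] at hsinh ⊢
  rw [cosh_two_mul]
  nlinarith [cosh_sq y]

theorem abs_mul_cosh_abs_div_sinh_abs (x : ℝ) :
    |x| * (cosh |x| / sinh |x|) = x * (cosh x / sinh x) := by
  rcases abs_choice x with h | h <;> rw [h]
  rw [cosh_neg, sinh_neg, div_neg, neg_mul_neg]

theorem mul_cosh_div_sinh_sub_one_nonneg {x : ℝ} (hx : x ≠ 0) :
    0 ≤ x * (cosh x / sinh x) - 1 := by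
  rw [← abs_mul_cosh_abs_div_sinh_abs, sub_nonneg, mul_div_assoc', le_div_iff₀ (sinh_pos_iff.2
    (abs_pos.2 hx)), one_mul]
  exact sinh_le_mul_cosh (abs_nonneg x)

theorem mul_cosh_div_sinh_sub_one_le {x : ℝ} (hx : x ≠ 0) :
    x * (cosh x / sinh x) - 1 ≤ x ^ 2 / 2 := by
  have hsinh : 0 < sinh |x| := sinh_pos_iff.2 (abs_pos.2 hx)
  rw [← abs_mul_cosh_abs_div_sinh_abs, ← sq_abs x, mul_div_assoc', sub_le_iff_le_add,
    div_le_iff₀ hsinh]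
  linarith [mul_cosh_sub_sinh_le (abs_nonneg x)]

theorem div_sinh_le_one (x : ℝ) : x / sinh x ≤ 1 := by
  rcases le_total 0 x with hx | hx
  · exact div_le_one_of_le₀ (self_le_sinh_iff.2 hx) (sinh_nonneg_iff.2 hx)
  · rw [← neg_div_neg_eq, ← sinh_neg]
    have hx' : 0 ≤ -x := neg_nonneg.2 hx
    exact div_le_one_of_le₀ (self_le_sinh_iff.2 hx') (sinh_nonneg_iff.2 hx')

theorem two_mul_div_sinh_two_mul {y : ℝ} (hy : y ≠ 0) :
    2 * y / sinh (2 * y) = 2 * y * (cosh y / sinh y - cosh (2 * y) / sinh (2 * y)) := by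
  have hs : sinh y ≠ 0 := sinh_ne_zero.2 hy
  have hc : cosh y ≠ 0 := (cosh_pos y).ne'
  rw [sinh_two_mul, cosh_two_mul]
  field_simp
  linear_combination -cosh_sq y

end Real

theorem hasSum_sub_succ_of_antitone {g : ℕ → ℝ} {l : ℝ} (hg : Antitone g)
    (hl : Tendsto g atTop (𝓝 l)) : HasSum (fun n ↦ g n - g (n + 1)) (g 0 - l) := by
  rw [hasSum_iff_tendsto_nat_of_nonneg fun n ↦ sub_nonneg.2 (hg n.le_succ)]
  simp only [Finset.sum_range_sub']
  exact tendsto_const_nhds.sub hl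

theorem hasSum_two_pow_mul_div_sinh_sub_one {z : ℝ} (hz : z ≠ 0) :
    HasSum (fun n : ℕ ↦ 2 ^ n * ((z / 2 ^ n) / sinh (z / 2 ^ n) - 1))
      (-(z * (cosh z / sinh z) - 1)) := by
  set g : ℕ → ℝ := fun n ↦ 2 ^ n * (z / 2 ^ n * (cosh (z / 2 ^ n) / sinh (z / 2 ^ n)) - 1)
  have hx : ∀ n : ℕ, z / 2 ^ n ≠ 0 := fun n ↦ div_ne_zero hz (by positivity)
  have htel : ∀ n : ℕ, 2 ^ n * ((z / 2 ^ n) / sinh (z / 2 ^ n) - 1) = -(g n - g (n + 1)) := by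
    intro n
    have hhalf : z / 2 ^ n = 2 * (z / 2 ^ (n + 1)) := by rw [pow_succ]; field_simp
    simp only [g]
    rw [hhalf, two_mul_div_sinh_two_mul (hx (n + 1)), pow_succ]
    ring
  have hanti : Antitone g := antitone_nat_of_succ_le fun n ↦ by
    have hterm := mul_nonpos_of_nonneg_of_nonpos (pow_nonneg zero_le_two n)
      (sub_nonpos.2 (div_sinh_le_one (z / 2 ^ n)))
    linarith [htel n]
  have hlim : Tendsto g atTop (𝓝 0) := by
    have hgeom : Tendsto (fun n : ℕ ↦ z ^ 2 / 2 * (1 / 2 : ℝ) ^ n) atTop (𝓝 0) := by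
      simpa using (tendsto_pow_atTop_nhds_zero_of_lt_one (r := (1 / 2 : ℝ)) (by norm_num)
        (by norm_num)).const_mul (z ^ 2 / 2)
    refine squeeze_zero (fun n ↦ ?_) (fun n ↦ ?_) hgeom
    · exact mul_nonneg (by positivity) (mul_cosh_div_sinh_sub_one_nonneg (hx n))
    · calc g n ≤ 2 ^ n * ((z / 2 ^ n) ^ 2 / 2) :=
            mul_le_mul_of_nonneg_left (mul_cosh_div_sinh_sub_one_le (hx n)) (by positivity)
        _ = z ^ 2 / 2 * (1 / 2) ^ n := by rw [one_div, inv_pow]; field_simp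
  simpa [htel, g] using (hasSum_sub_succ_of_antitone hanti hlim).neg

/-- Infinite product form of the logistic expansion: for real `z ≠ 0` and real `a`,
the infinite product `∏_{n=0}^∞ exp((a²/2) 2ⁿ ((z/2ⁿ)/sinh(z/2ⁿ) - 1))` converges and
equals `exp(-(a²/2)(z coth z - 1))`. -/
theorem hasProd_exp_logistic_expansion (z : ℝ) (hz : z ≠ 0) (a : ℝ) :
    HasProd
      (fun n : ℕ =>
        Real.exp ((a ^ 2 / 2) * 2 ^ n * ((z / 2 ^ n) / Real.sinh (z / 2 ^ n) - 1)))
      (Real.exp (-(a ^ 2 / 2) * (z * (Real.cosh z / Real.sinh z) - 1))) := by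
  have h := ((hasSum_two_pow_mul_div_sinh_sub_one hz).mul_left (a ^ 2 / 2)).rexp
  simp only [mul_neg, ← neg_mul, ← mul_assoc] at h
  exact h
end

section
/- Let F_1,…,F_N and G_1,…,G_N be cumulative distribution functions of real random variables, and form the distribution functions of sums of independent random variables: H_F = F_0 ⋆ F_1 ⋆ ⋯ ⋆ F_N and H_G = F_0 ⋆ G_1 ⋆ ⋯ ⋆ G_N (convolution of the corresponding laws, with a common factor F_0). Then sup_x |H_F(x) − H_G(x)| ≤ ∑_{n=1}^{N} sup_x |F_n(x) − G_n(x)|. -/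
/-!
The CDF of `μ ∗ ν` is `x ↦ ∫ F_ν (x - a) dμ(a)`, so convolving two laws with a common probability
measure averages the difference of their CDFs and cannot increase its sup norm. Passing through
the mixed term `μ' ∗ ν`, the sup distance of CDFs is therefore subadditive under convolution,
and induction along the chain gives the bound.
-/

open MeasureTheory ProbabilityTheory

/-- Iterated (additive) convolution `μ0 ⋆ ν 1 ⋆ ⋯ ⋆ ν N` of measures on `ℝ`. -/
noncomputable def convChain (μ0 : Measure ℝ) (ν : ℕ → Measure ℝ) : ℕ → Measure ℝ
  | 0 => μ0
  | n + 1 => Measure.conv (convChain μ0 ν n) (ν (n + 1))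

open Set

lemma abs_cdf_sub_cdf_le_one (μ ν : Measure ℝ) (y : ℝ) : |cdf μ y - cdf ν y| ≤ 1 :=
  abs_sub_le_iff.2 ⟨by linarith [cdf_le_one μ y, cdf_nonneg ν y],
    by linarith [cdf_le_one ν y, cdf_nonneg μ y]⟩

lemma bddAbove_range_abs_cdf_sub_cdf (μ ν : Measure ℝ) :
    BddAbove (range fun y ↦ |cdf μ y - cdf ν y|) :=
  ⟨1, by rintro _ ⟨y, rfl⟩; exact abs_cdf_sub_cdf_le_one μ ν y⟩

lemma integrable_cdf_sub_left (μ ν : Measure ℝ) [IsFiniteMeasure μ] (x : ℝ) :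
    Integrable (fun a ↦ cdf ν (x - a)) μ := by
  refine .of_bound ((monotone_cdf ν).measurable.comp (by fun_prop)).aestronglyMeasurable 1 ?_
  filter_upwards with a
  rw [Real.norm_of_nonneg (cdf_nonneg ν _)]
  exact cdf_le_one ν _

lemma conv_apply_Iic (μ ν : Measure ℝ) [SFinite ν] (x : ℝ) :
    (μ ∗ ν) (Iic x) = ∫⁻ a, ν (Iic (x - a)) ∂μ := by
  rw [Measure.conv, Measure.map_apply (by fun_prop) measurableSet_Iic,
    Measure.prod_apply (measurableSet_Iic.preimage (by fun_prop))]
  congr! with a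
  ext b
  simp [le_sub_iff_add_le']

lemma cdf_conv (μ ν : Measure ℝ) [IsProbabilityMeasure μ] [IsProbabilityMeasure ν] (x : ℝ) :
    cdf (μ ∗ ν) x = ∫ a, cdf ν (x - a) ∂μ := by
  have hnonneg : 0 ≤ᵐ[μ] fun a ↦ cdf ν (x - a) := .of_forall fun a ↦ cdf_nonneg ν _
  rw [← ENNReal.ofReal_eq_ofReal_iff (cdf_nonneg _ x) (integral_nonneg_of_ae hnonneg),
    ofReal_cdf, conv_apply_Iic, ofReal_integral_eq_lintegral_ofReal
      (integrable_cdf_sub_left μ ν x) hnonneg]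
  simp only [ofReal_cdf]

lemma abs_cdf_conv_sub_cdf_conv_le_of_right (μ : Measure ℝ) {ν η : Measure ℝ}
    [IsProbabilityMeasure μ] [IsProbabilityMeasure ν] [IsProbabilityMeasure η] {C : ℝ}
    (hC : ∀ y, |cdf ν y - cdf η y| ≤ C) (x : ℝ) :
    |cdf (μ ∗ ν) x - cdf (μ ∗ η) x| ≤ C := by
  rw [cdf_conv, cdf_conv,
    ← integral_sub (integrable_cdf_sub_left μ ν x) (integrable_cdf_sub_left μ η x)]
  simpa using norm_integral_le_of_norm_le_const (μ := μ) 
    (.of_forall fun a ↦ (Real.norm_eq_abs _).trans_le (hC (x - a)))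

lemma abs_cdf_conv_sub_cdf_conv_le {μ μ' ν ν' : Measure ℝ}
    [IsProbabilityMeasure μ] [IsProbabilityMeasure μ'] [IsProbabilityMeasure ν]
    [IsProbabilityMeasure ν'] {C D : ℝ} (hC : ∀ y, |cdf μ y - cdf μ' y| ≤ C)
    (hD : ∀ y, |cdf ν y - cdf ν' y| ≤ D) (x : ℝ) :
    |cdf (μ ∗ ν) x - cdf (μ' ∗ ν') x| ≤ C + D := by
  have hleft : |cdf (μ ∗ ν) x - cdf (μ' ∗ ν) x| ≤ C := by
    rw [Measure.conv_comm μ, Measure.conv_comm μ']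
    exact abs_cdf_conv_sub_cdf_conv_le_of_right ν hC x
  have hright : |cdf (μ' ∗ ν) x - cdf (μ' ∗ ν') x| ≤ D :=
    abs_cdf_conv_sub_cdf_conv_le_of_right μ' hD x
  exact (abs_sub_le _ _ _).trans (add_le_add hleft hright)

lemma isProbabilityMeasure_convChain (μ0 : Measure ℝ) (ν : ℕ → Measure ℝ)
    [IsProbabilityMeasure μ0] (hν : ∀ n, IsProbabilityMeasure (ν n)) (n : ℕ) :
    IsProbabilityMeasure (convChain μ0 ν n) := by
  induction n with
  | zero => assumption
  | succ n ih => exact Measure.probabilitymeasure_of_probabilitymeasures_conv _ _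

/-- Kolmogorov distance bound for convolutions with a common factor: if
`H_F = F_0 ⋆ F_1 ⋆ ⋯ ⋆ F_N` and `H_G = F_0 ⋆ G_1 ⋆ ⋯ ⋆ G_N` are the CDFs of sums of
independent random variables, then
`sup_x |H_F x - H_G x| ≤ ∑_{n=1}^{N} sup_x |F_n x - G_n x|`. -/
theorem cdf_conv_chain_dist_le (μ0 : Measure ℝ) (ν η : ℕ → Measure ℝ)
    [IsProbabilityMeasure μ0]
    (hν : ∀ n, IsProbabilityMeasure (ν n)) (hη : ∀ n, IsProbabilityMeasure (η n))
    (N : ℕ) (x : ℝ) :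
    |cdf (convChain μ0 ν N) x - cdf (convChain μ0 η N) x| ≤
      ∑ n ∈ Finset.Icc 1 N, ⨆ y : ℝ, |cdf (ν n) y - cdf (η n) y| := by
  induction N generalizing x with
  | zero => simp [convChain]
  | succ N ih =>
    have := isProbabilityMeasure_convChain μ0 ν hν N
    have := isProbabilityMeasure_convChain μ0 η hη N
    rw [Finset.sum_Icc_succ_top (Nat.le_add_left 1 N)]
    exact abs_cdf_conv_sub_cdf_conv_le ih
      (fun y ↦ le_ciSup (bddAbove_range_abs_cdf_sub_cdf _ _) y) x
end

section
/- The probability density function of log(XY) where X and Y are independent standard Exponential random variables is φ₂(x) = 2·K₀(2·e^{x/2})·e^{x}, where K₀ is the modified Bessel function of the second kind of order 0. -/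
open MeasureTheory ProbabilityTheory

/-- The modified Bessel function of the second kind of order `0`:
`K₀(z) = ∫₀^∞ e^{-z cosh t} dt`. -/
noncomputable def besselK0 (z : ℝ) : ℝ :=
  ∫ t in Set.Ioi (0 : ℝ), Real.exp (-z * Real.cosh t)

/-!
Since `X, Y ≠ 0` almost surely, `log (XY) = log X + log Y`, and `log X` has density
`e^{u - e^u}`, so by independence the law of `log (XY)` has density
`∫ e^{u - e^u} e^{(x - u) - e^{x - u}} du`. Centring at `u = x/2 + t` turns
`e^u + e^{x - u}` into `2 e^{x/2} cosh t`, so the integral is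
`eˣ ∫_ℝ exp (-2 e^{x/2} cosh t) dt = 2 eˣ K₀(2 e^{x/2})`, as the integrand is even in `t`.
-/

open Real Set
open scoped ENNReal

lemma Real.one_add_sq_div_two_le_cosh (t : ℝ) : 1 + t ^ 2 / 2 ≤ cosh t := by
  have hsinh : (t / 2) ^ 2 ≤ sinh (t / 2) ^ 2 := by
    rw [← sq_abs (sinh _), abs_sinh, ← sq_abs (t / 2)]
    exact pow_le_pow_left₀ (abs_nonneg _) (self_le_sinh_iff.2 (abs_nonneg _)) 2
  have hcosh : cosh t = 1 + 2 * sinh (t / 2) ^ 2 := by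
    conv_lhs => rw [show t = 2 * (t / 2) by ring, cosh_two_mul, cosh_sq']
    ring
  nlinarith

lemma integrable_exp_neg_mul_cosh {z : ℝ} (hz : 0 < z) :
    Integrable fun t => exp (-z * cosh t) := by
  refine (integrable_exp_neg_mul_sq (half_pos hz)).mono' (by fun_prop) (ae_of_all _ fun t => ?_)
  rw [norm_of_nonneg (exp_pos _).le, exp_le_exp]
  nlinarith [one_add_sq_div_two_le_cosh t]

lemma lintegral_exp_neg_mul_cosh {z : ℝ} (hz : 0 < z) :
    ∫⁻ t, ENNReal.ofReal (exp (-z * cosh t)) = ENNReal.ofReal (2 * besselK0 z) := by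
  rw [← ofReal_integral_eq_lintegral_ofReal (integrable_exp_neg_mul_cosh hz)
    (ae_of_all _ fun t => (exp_pos _).le), besselK0, ← integral_comp_abs]
  simp only [cosh_abs]

lemma expMeasure_Iic_zero (r : ℝ) : expMeasure r (Iic 0) = 0 := by
  rw [expMeasure, gammaMeasure, withDensity_apply _ measurableSet_Iic,
    setLIntegral_congr Iio_ae_eq_Iic.symm]
  exact lintegral_exponentialPDF_of_nonpos le_rfl

lemma image_exp_eq_preimage_log_inter_Ioi (s : Set ℝ) : exp '' s = log ⁻¹' s ∩ Ioi 0 := by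
  ext y
  constructor
  · rintro ⟨u, hu, rfl⟩
    exact ⟨by simpa using hu, exp_pos u⟩
  · rintro ⟨hy, hpos⟩
    exact ⟨log y, hy, exp_log hpos⟩

noncomputable def logExponentialPDF (r u : ℝ) : ℝ≥0∞ :=
  ENNReal.ofReal (r * exp (u - r * exp u))

lemma measurable_logExponentialPDF (r : ℝ) : Measurable (logExponentialPDF r) := by
  unfold logExponentialPDF
  fun_prop

lemma map_log_expMeasure (r : ℝ) :
    (expMeasure r).map log = volume.withDensity (logExponentialPDF r) := by
  ext s hs
  rw [Measure.map_apply measurable_log hs, withDensity_apply _ hs,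
    ← measure_inter_conull (t := Ioi 0) (by rw [compl_Ioi, expMeasure_Iic_zero]),
    ← image_exp_eq_preimage_log_inter_Ioi, expMeasure, gammaMeasure, withDensity_apply',
    lintegral_image_eq_lintegral_abs_deriv_mul hs (fun u _ => (hasDerivAt_exp u).hasDerivWithinAt)
      exp_injective.injOn]
  refine lintegral_congr fun u => ?_
  change ENNReal.ofReal |exp u| * exponentialPDF r (exp u) = _
  rw [logExponentialPDF, abs_of_pos (exp_pos u), exponentialPDF_of_nonneg (exp_pos u).le,
    ← ENNReal.ofReal_mul (exp_pos u).le, sub_eq_add_neg, exp_add]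
  ring_nf

lemma lconvolution_logExponentialPDF_one_self (x : ℝ) :
    (logExponentialPDF 1 ⋆ₗ logExponentialPDF 1) x =
      ENNReal.ofReal (2 * besselK0 (2 * exp (x / 2)) * exp x) := by
  have hz : 0 < 2 * exp (x / 2) := by positivity
  have hpoint : ∀ t, logExponentialPDF 1 (t + x / 2) * logExponentialPDF 1 (-(t + x / 2) + x) =
      ENNReal.ofReal (exp x) * ENNReal.ofReal (exp (-(2 * exp (x / 2)) * cosh t)) := by
    intro t
    simp only [logExponentialPDF, one_mul]
    rw [← ENNReal.ofReal_mul (exp_pos _).le, ← ENNReal.ofReal_mul (exp_pos _).le, ← exp_add,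
      ← exp_add, cosh_eq]
    congr 2
    rw [show -(t + x / 2) + x = -t + x / 2 by ring, exp_add, exp_add (-t)]
    ring
  rw [lconvolution_def, ← lintegral_add_right_eq_self _ (x / 2)]
  simp only [hpoint]
  rw [lintegral_const_mul' _ _ ENNReal.ofReal_ne_top, lintegral_exp_neg_mul_cosh hz,
    ← ENNReal.ofReal_mul (exp_pos _).le, mul_comm]

/-- If `X`, `Y` are independent standard Exponential random variables, then `log (XY)`
has density `φ₂(x) = 2 K₀(2 e^{x/2}) eˣ`. -/
theorem log_prod_two_exponentials_density {Ω : Type*} [MeasurableSpace Ω]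
    (μ : Measure Ω) [IsProbabilityMeasure μ] (X Y : Ω → ℝ)
    (hX : Measurable X) (hY : Measurable Y) (hXY : IndepFun X Y μ)
    (hXlaw : μ.map X = expMeasure 1) (hYlaw : μ.map Y = expMeasure 1) :
    μ.map (fun ω => Real.log (X ω * Y ω)) =
      volume.withDensity
        (fun x => ENNReal.ofReal (2 * besselK0 (2 * Real.exp (x / 2)) * Real.exp x)) := by
  have hlaw_log : ∀ Z : Ω → ℝ, Measurable Z → μ.map Z = expMeasure 1 →
      μ.map (log ∘ Z) = volume.withDensity (logExponentialPDF 1) :=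
    fun Z hZ hlaw => by rw [← Measure.map_map measurable_log hZ, hlaw, map_log_expMeasure]
  have hne_zero : ∀ Z : Ω → ℝ, Measurable Z → μ.map Z = expMeasure 1 → ∀ᵐ ω ∂μ, Z ω ≠ 0 :=
    fun Z hZ hlaw => ae_of_ae_map hZ.aemeasurable <| by
      rw [hlaw]
      exact (withDensity_absolutelyContinuous _ _).ae_le (volume.ae_ne 0)
  have hlog_mul : (fun ω => log (X ω * Y ω)) =ᵐ[μ] log ∘ X + log ∘ Y := by
    filter_upwards [hne_zero X hX hXlaw, hne_zero Y hY hYlaw] with ω hXω hYω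
    exact log_mul hXω hYω
  rw [Measure.map_congr hlog_mul, (hXY.comp measurable_log measurable_log).map_add_eq_map_conv_map
    (measurable_log.comp hX) (measurable_log.comp hY), hlaw_log X hX hXlaw, hlaw_log Y hY hYlaw,
    conv_withDensity_eq_lconvolution (measurable_logExponentialPDF 1)
      (measurable_logExponentialPDF 1)]
  exact congrArg _ (funext lconvolution_logExponentialPDF_one_self)
end
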